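/- There exists a constant C > 0 depending only on C₀ such that for every t with |t| ≤ π, |Â(t)| ≤ 1 + Cγ(Re Ĥ(t) − 1 − α). Moreover, for every fixed C₂ > 0, if additionally α ≥ C₂ then there exists a constant C' > 0 depending only on C₀ and C₂ such that |Δ̂₁(t)| ≤ 1 − C'γ for all t with |t| ≤ π. -/

import Mathlib

open Complex

noncomputable section

/-- `e^{a i t}` -/
def expi (a : ℂ) (t : ℝ) : ℂ := Complex.exp (a * Complex.I * (t : ℂ))

/-- `e^{it}` -/
def eit (t : ℝ) : ℂ := expi 1 t

/-- `D̂(t) = (1 − γ + βe^{it})² − 4e^{it}(β − γ(1−α))` -/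
def Dhat (α β γ : ℝ) (t : ℝ) : ℂ :=
  (1 - (γ : ℂ) + (β : ℂ) * eit t) ^ 2 - 4 * eit t * ((β : ℂ) - (γ : ℂ) * (1 - (α : ℂ)))

/-- The square root of `D̂(t)` with positive real part (junk value `0` if none exists). -/
def sqrtD (α β γ : ℝ) (t : ℝ) : ℂ :=
  letI := Classical.propDecidable (∃ s : ℂ, s ^ 2 = Dhat α β γ t ∧ 0 < s.re)
  if h : ∃ s : ℂ, s ^ 2 = Dhat α β γ t ∧ 0 < s.re then h.choose else 0

def Lam1 (α β γ : ℝ) (t : ℝ) : ℂ := (1 - (γ : ℂ) + (β : ℂ) * eit t + sqrtD α β γ t) / 2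

def Lam2 (α β γ : ℝ) (t : ℝ) : ℂ := (1 - (γ : ℂ) + (β : ℂ) * eit t - sqrtD α β γ t) / 2

/-- Common numerator of `Ŵ₁, Ŵ₂, V̂, V̂₁, V̂₂` with `L` in place of `Λ_j` (resp. `Δ̂`). -/
def Wnum (α β γ : ℝ) (d : ℕ) (L : ℂ) (t : ℝ) : ℂ :=
  (expi ((d : ℂ) + 1) t - 1) * ((β : ℂ) - (γ : ℂ) * (1 - (α : ℂ)))
    - (expi (d : ℂ) t - 1) * L
    + (eit t - 1) * ((γ : ℂ) * L - (β : ℂ) + (γ : ℂ) * (1 - (α : ℂ)))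

def W1denom (α β γ : ℝ) (d : ℕ) (t : ℝ) : ℂ :=
  (Lam1 α β γ t - expi (d : ℂ) t) * sqrtD α β γ t

def W2denom (α β γ : ℝ) (d : ℕ) (t : ℝ) : ℂ :=
  -((Lam2 α β γ t - expi (d : ℂ) t) * sqrtD α β γ t)

def W1 (α β γ : ℝ) (d : ℕ) (t : ℝ) : ℂ :=
  Wnum α β γ d (Lam1 α β γ t) t / W1denom α β γ d t

def W2 (α β γ : ℝ) (d : ℕ) (t : ℝ) : ℂ :=
  Wnum α β γ d (Lam2 α β γ t) t / W2denom α β γ d t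

def W3denom (α β γ : ℝ) (d : ℕ) (t : ℝ) : ℂ :=
  (expi ((d : ℂ) - 1) t - (β : ℂ)) * (expi (d : ℂ) t - (1 - (γ : ℂ)))
    - (γ : ℂ) * (1 - (α : ℂ) - (β : ℂ))

def W3 (α β γ : ℝ) (d : ℕ) (t : ℝ) : ℂ :=
  (α : ℂ) * (γ : ℂ) * expi (d : ℂ) t / W3denom α β γ d t

def Hhat (β : ℝ) (t : ℝ) : ℂ := (1 - (β : ℂ)) * eit t / (1 - (β : ℂ) * eit t)

def Psihat (α β : ℝ) (t : ℝ) : ℂ :=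
  (1 - (α : ℂ) - (β : ℂ)) * eit t / (1 - (β : ℂ) * eit t)

def A1 (α β γ : ℝ) (t : ℝ) : ℂ :=
  (1 - (β : ℂ)) * (Psihat α β t - 1) / (1 + (γ : ℂ) - (β : ℂ))

def A2 (α β γ : ℝ) (t : ℝ) : ℂ :=
  -((β : ℂ) * (1 - (β : ℂ)) * (Hhat β t - 1) * (Psihat α β t - 1)) / (1 + (γ : ℂ) - (β : ℂ)) ^ 2

def A3 (α β γ : ℝ) (t : ℝ) : ℂ :=
  (β : ℂ) ^ 2 * (1 - (β : ℂ)) * (Hhat β t - 1) ^ 2 * (Psihat α β t - 1)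
    / (1 + (γ : ℂ) - (β : ℂ)) ^ 3

def A4 (α β γ : ℝ) (t : ℝ) : ℂ :=
  -((1 - (β : ℂ)) ^ 3 * (Psihat α β t - 1) ^ 2)
    / ((1 + (γ : ℂ) - (β : ℂ)) ^ 3 * (1 - (β : ℂ) * eit t))

def A5 (α β γ : ℝ) (t : ℝ) : ℂ :=
  3 * (β : ℂ) * (1 - (β : ℂ)) ^ 3 * (Psihat α β t - 1) ^ 2 * (Hhat β t - 1)
    / ((1 + (γ : ℂ) - (β : ℂ)) ^ 4 * (1 - (β : ℂ) * eit t))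

def A6 (α β γ : ℝ) (t : ℝ) : ℂ :=
  2 * (1 - (β : ℂ)) ^ 5 * (Psihat α β t - 1) ^ 3
    / ((1 + (γ : ℂ) - (β : ℂ)) ^ 5 * (1 - (β : ℂ) * eit t) ^ 2)

def Ahat (α β γ : ℝ) (t : ℝ) : ℂ :=
  1 + A1 α β γ t * (γ : ℂ) + (A2 α β γ t + A4 α β γ t) * (γ : ℂ) ^ 2
    + (A3 α β γ t + A5 α β γ t + A6 α β γ t) * (γ : ℂ) ^ 3

def DeltaHat (α β γ : ℝ) (t : ℝ) : ℂ := 1 + A1 α β γ t * (γ : ℂ)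

def Delta1Hat (α β γ : ℝ) (t : ℝ) : ℂ :=
  1 + A1 α β γ t * (γ : ℂ) + (A2 α β γ t + A4 α β γ t) * (γ : ℂ) ^ 2

def Ghat (α β γ : ℝ) (t : ℝ) : ℂ :=
  Complex.exp (Ahat α β γ t - 1
    - (A1 α β γ t ^ 2 * (γ : ℂ) ^ 2
        + 2 * A1 α β γ t * (A2 α β γ t + A4 α β γ t) * (γ : ℂ) ^ 3) / 2
    + A1 α β γ t ^ 3 * (γ : ℂ) ^ 3 / 3)

def G1hat (α β γ : ℝ) (t : ℝ) : ℂ :=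
  Complex.exp (A1 α β γ t * (γ : ℂ)
    + (A2 α β γ t + A4 α β γ t - A1 α β γ t ^ 2 / 2) * (γ : ℂ) ^ 2)

def Vhat (α β γ : ℝ) (d : ℕ) (t : ℝ) : ℂ :=
  Wnum α β γ d (DeltaHat α β γ t) t /
    ((Ahat α β γ t - expi (d : ℂ) t)
      * (2 * DeltaHat α β γ t - 1 + (γ : ℂ) - (β : ℂ) * eit t))

def V1hat (α β γ : ℝ) (d : ℕ) (t : ℝ) : ℂ :=
  Wnum α β γ d (DeltaHat α β γ t) t /
    ((Delta1Hat α β γ t - expi (d : ℂ) t)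
      * (2 * DeltaHat α β γ t - 1 + (γ : ℂ) - (β : ℂ) * eit t))

def V2hat (α β γ : ℝ) (d : ℕ) (t : ℝ) : ℂ :=
  Wnum α β γ d (DeltaHat α β γ t) t /
    ((Delta1Hat α β γ t - expi (d : ℂ) t)
      * (2 * Delta1Hat α β γ t - 1 + (γ : ℂ) - (β : ℂ) * eit t))

/-- `f(1) = 0, f(2) = 1, f(3) = d` (states indexed `0,1,2`). -/
def fval (d : ℕ) : Fin 3 → ℤ := ![0, 1, (d : ℤ)]

/-- Transition matrix of the Markov chain. -/
def Pmat (α β γ : ℝ) : Fin 3 → Fin 3 → ℝ :=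
  ![![1 - γ, γ, 0], ![1 - α - β, β, α], ![0, 0, 1]]

/-- The path `(ξ₀, ξ₁, …, ξ_n)` obtained by prepending the initial (healthy) state. -/
def path (n : ℕ) (s : Fin n → Fin 3) : Fin (n + 1) → Fin 3 := Fin.cons 0 s

/-- `F_n{m}`: the mass the distribution of `f(ξ₁) + ⋯ + f(ξ_n)` puts on `m`,
for the chain started at the healthy state `0`. -/
def Fmass (α β γ : ℝ) (d n : ℕ) (m : ℤ) : ℝ :=
  ∑ s ∈ Finset.univ.filter (fun s : Fin n → Fin 3 => (∑ k, fval d (s k)) = m),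
    ∏ k : Fin n, Pmat α β γ (path n s k.castSucc) (path n s k.succ)

/-- The characteristic function `Σ_{m ∈ ℤ} F_n{m} e^{imt}` of `F_n`. -/
def charFn (α β γ : ℝ) (d n : ℕ) (t : ℝ) : ℂ :=
  ∑' m : ℤ, (Fmass α β γ d n m : ℂ) * expi (m : ℂ) t

/-- Mass at `k ∈ ℤ` of the signed measure associated with the Fourier transform `Mhat`. -/
def massOf (Mhat : ℝ → ℂ) (k : ℤ) : ℂ :=
  (1 / (2 * Real.pi)) *
    ∫ t in (-Real.pi)..Real.pi, Complex.exp (-(k : ℂ) * Complex.I * (t : ℂ)) * Mhat t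

/-- Fourier transform of the signed measure `GⁿV + E`. -/
def approxGnVE (α β γ : ℝ) (d n : ℕ) (t : ℝ) : ℂ :=
  Ghat α β γ t ^ n * Vhat α β γ d t + expi ((n : ℂ) * (d : ℂ)) t * W3 α β γ d t

/-- Fourier transform of the signed measure `G₁ⁿV₁ + E`. -/
def approxG1nV1E (α β γ : ℝ) (d n : ℕ) (t : ℝ) : ℂ :=
  G1hat α β γ t ^ n * V1hat α β γ d t + expi ((n : ℂ) * (d : ℂ)) t * W3 α β γ d t

/-- Fourier transform of the signed measure `G₁ⁿV₂ + E`. -/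
def approxG1nV2E (α β γ : ℝ) (d n : ℕ) (t : ℝ) : ℂ :=
  G1hat α β γ t ^ n * V2hat α β γ d t + expi ((n : ℂ) * (d : ℂ)) t * W3 α β γ d t

/-- Fourier transform of the signed measure `E`. -/
def approxE (α β γ : ℝ) (d n : ℕ) (t : ℝ) : ℂ :=
  expi ((n : ℂ) * (d : ℂ)) t * W3 α β γ d t

/-- Mass at `k` of the difference `F_n − M`, where `M` has Fourier transform `Mhat`. -/
def diffMass (α β γ : ℝ) (d n : ℕ) (Mhat : ℝ → ℂ) (k : ℤ) : ℂ :=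
  (Fmass α β γ d n k : ℂ) - massOf Mhat k

/-- Condition (C) of the paper. -/
def condC (C₀ α β γ : ℝ) : Prop :=
  0 < α ∧ α < 1 ∧ 0 < β ∧ β < 1 ∧ 0 < γ ∧ γ < 1 ∧
    β ≤ 0.15 ∧ γ ≤ 0.05 ∧ α ≤ C₀ ∧ α + β < 1

/-!
Write `a = Â₁`, `b = β(Ĥ − 1)/(1 + γ − β)` and `r = (1 − β)/((1 + γ − β)(1 − βe^{it}))`. Then
`Â₂ = −ab`, `Â₄ = −a²r`, `Â₃ = ab²`, `Â₅ = 3a²br` and `Â₆ = 2a³r²`. Since `Ψ̂ = ρĤ` with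
`ρ = (1 − α − β)/(1 − β) ∈ [0, 1]` and `‖Ĥ‖ ≤ 1`, the quantity `S = (1 − β)(1 − Re Ψ̂)` satisfies
`Re a = −S/(1 + γ − β)` and `‖a‖², ‖a‖‖b‖ = O(S)`, while `a`, `b`, `r` are bounded. As
`‖1 + z‖ ≤ 1 + Re z + ‖z‖²/2`, for `γ ≤ 0.05` the gain of the linear term dominates all the
others, and `‖Â‖, ‖Δ̂₁‖ ≤ 1 − γS/2`. Finally `S = (1 − α − β)(1 − Re Ĥ) + α`, which is at least
`(1 − Re Ĥ + α)/10` and at least `α`.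
-/

lemma norm_one_add_le_one_add_re_add_sq_div_two (z : ℂ) :
    ‖1 + z‖ ≤ 1 + z.re + ‖z‖ ^ 2 / 2 := by
  have hsq : ‖1 + z‖ ^ 2 = 1 + 2 * z.re + ‖z‖ ^ 2 := by
    simp only [Complex.sq_norm, Complex.normSq_apply, Complex.add_re, Complex.add_im,
      Complex.one_re, Complex.one_im]
    ring
  have hre : -‖z‖ ≤ z.re := neg_le_of_abs_le (Complex.abs_re_le_norm z)
  nlinarith [sq_nonneg (z.re + ‖z‖ ^ 2 / 2), sq_nonneg (‖z‖ - 1), norm_nonneg (1 + z)]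

lemma norm_sub_one_sq_le {z : ℂ} (hz : ‖z‖ ≤ 1) : ‖z - 1‖ ^ 2 ≤ 2 * (1 - z.re) := by
  have hsq : ‖z - 1‖ ^ 2 = ‖z‖ ^ 2 - 2 * z.re + 1 := by
    simp only [Complex.sq_norm, Complex.normSq_apply, Complex.sub_re, Complex.sub_im,
      Complex.one_re, Complex.one_im]
    ring
  nlinarith [norm_nonneg z]

lemma norm_sub_one_mul_norm_ofReal_mul_sub_one_le {z : ℂ} {ρ : ℝ} (hz : ‖z‖ ≤ 1)
    (hρ0 : 0 ≤ ρ) (hρ1 : ρ ≤ 1) :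
    ‖z - 1‖ * ‖(ρ : ℂ) * z - 1‖ ≤ 4 * (1 - ρ * z.re) := by
  have hρz : ‖(ρ : ℂ) * z‖ ≤ 1 := by
    rw [norm_mul, Complex.norm_real, Real.norm_of_nonneg hρ0]
    nlinarith [norm_nonneg z]
  have hsq := norm_sub_one_sq_le hρz
  rw [Complex.re_ofReal_mul] at hsq
  have hle2 : ‖(ρ : ℂ) * z - 1‖ ≤ 2 := by
    linarith [norm_sub_le ((ρ : ℂ) * z) 1, norm_one (α := ℂ)]
  have hdist : ‖z - 1‖ ≤ ‖(ρ : ℂ) * z - 1‖ + (1 - ρ) := by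
    have : z - 1 = ((ρ : ℂ) * z - 1) + ((1 - ρ : ℝ) : ℂ) * z := by push_cast; ring
    rw [this]
    refine (norm_add_le _ _).trans ?_
    rw [norm_mul, Complex.norm_real, Real.norm_of_nonneg (by linarith)]
    nlinarith [norm_nonneg z]
  have hre : 1 - ρ ≤ 1 - ρ * z.re := by
    nlinarith [Complex.re_le_norm z]
  calc ‖z - 1‖ * ‖(ρ : ℂ) * z - 1‖
      ≤ (‖(ρ : ℂ) * z - 1‖ + (1 - ρ)) * ‖(ρ : ℂ) * z - 1‖ :=
        mul_le_mul_of_nonneg_right hdist (norm_nonneg _)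
    _ = ‖(ρ : ℂ) * z - 1‖ ^ 2 + (1 - ρ) * ‖(ρ : ℂ) * z - 1‖ := by ring
    _ ≤ 2 * (1 - ρ * z.re) + (1 - ρ * z.re) * 2 := by
        gcongr
        linarith
    _ = 4 * (1 - ρ * z.re) := by ring

structure CoeffBounds (S : ℝ) (a b r : ℂ) : Prop where
  nonneg : 0 ≤ S
  re_le : a.re ≤ -0.95 * S
  norm_le : ‖a‖ ≤ 2.4
  norm_sq_le : ‖a‖ ^ 2 ≤ 2.8 * S
  norm_mul_norm_le : ‖a‖ * ‖b‖ ≤ 0.84 * S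
  norm_b_le : ‖b‖ ≤ 0.36
  norm_r_le : ‖r‖ ≤ 1.18

namespace CoeffBounds

variable {S : ℝ} {a b r : ℂ}

lemma norm_one_add_mul_le (h : CoeffBounds S a b r) {γ : ℝ} (hγ0 : 0 < γ) (hγ : γ ≤ 0.05) :
    ‖1 + a * γ‖ ≤ 1 - 0.88 * γ * S := by
  have key := norm_one_add_le_one_add_re_add_sq_div_two (a * γ)
  rw [Complex.re_mul_ofReal, norm_mul, Complex.norm_real, Real.norm_of_nonneg hγ0.le] at key
  nlinarith [mul_le_mul_of_nonneg_right h.re_le hγ0.le,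
    mul_le_mul_of_nonneg_right h.norm_sq_le (sq_nonneg γ),
    mul_nonneg (mul_nonneg h.nonneg hγ0.le) (sub_nonneg.mpr hγ)]

lemma norm_quadCoeff_le (h : CoeffBounds S a b r) : ‖a * b + a ^ 2 * r‖ ≤ 4.2 * S := by
  have hab : ‖a * b‖ ≤ 0.84 * S := by rw [norm_mul]; exact h.norm_mul_norm_le
  have har : ‖a ^ 2 * r‖ ≤ 2.8 * S * 1.18 := by
    rw [norm_mul, norm_pow]
    exact mul_le_mul h.norm_sq_le h.norm_r_le (norm_nonneg _) (by linarith [h.nonneg])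
  linarith [norm_add_le (a * b) (a ^ 2 * r), h.nonneg]

lemma norm_cubicCoeff_le (h : CoeffBounds S a b r) :
    ‖a * b ^ 2 + 3 * a ^ 2 * b * r + 2 * a ^ 3 * r ^ 2‖ ≤ 23 * S := by
  have hS := h.nonneg
  have hb := h.norm_b_le
  have hr := h.norm_r_le
  have h1 : ‖a * b ^ 2‖ ≤ 0.84 * S * 0.36 := by
    rw [norm_mul, norm_pow, sq, ← mul_assoc]
    exact mul_le_mul h.norm_mul_norm_le hb (norm_nonneg _) (by positivity)
  have h2 : ‖3 * a ^ 2 * b * r‖ ≤ 3 * (2.8 * S * 0.36 * 1.18) := by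
    have e : ‖3 * a ^ 2 * b * r‖ = 3 * (‖a‖ ^ 2 * ‖b‖ * ‖r‖) := by
      rw [norm_mul, norm_mul, norm_mul, norm_pow, RCLike.norm_ofNat]; ring
    rw [e]
    refine mul_le_mul_of_nonneg_left ?_ (by norm_num)
    exact mul_le_mul (mul_le_mul h.norm_sq_le hb (norm_nonneg _) (by positivity)) hr
      (norm_nonneg _) (by positivity)
  have h3 : ‖2 * a ^ 3 * r ^ 2‖ ≤ 2 * (2.4 * (2.8 * S) * 1.18 ^ 2) := by
    have e : ‖2 * a ^ 3 * r ^ 2‖ = 2 * (‖a‖ * ‖a‖ ^ 2 * ‖r‖ ^ 2) := by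
      rw [norm_mul, norm_mul, norm_pow, norm_pow, RCLike.norm_ofNat]; ring
    rw [e]
    refine mul_le_mul_of_nonneg_left ?_ (by norm_num)
    exact mul_le_mul (mul_le_mul h.norm_le h.norm_sq_le (sq_nonneg _) (by norm_num))
      (pow_le_pow_left₀ (norm_nonneg _) hr 2) (sq_nonneg _) (by positivity)
  linarith [norm_add₃_le (a := a * b ^ 2) (b := 3 * a ^ 2 * b * r) (c := 2 * a ^ 3 * r ^ 2)]

lemma norm_quadratic_le (h : CoeffBounds S a b r) {γ : ℝ} (hγ0 : 0 < γ) (hγ : γ ≤ 0.05) :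
    ‖1 + a * γ - (a * b + a ^ 2 * r) * γ ^ 2‖ ≤ 1 - 0.6 * γ * S := by
  have hγn : ‖(γ : ℂ)‖ = γ := by rw [Complex.norm_real, Real.norm_of_nonneg hγ0.le]
  have hp : ‖(a * b + a ^ 2 * r) * γ ^ 2‖ ≤ 4.2 * S * γ ^ 2 := by
    rw [norm_mul, norm_pow, hγn]
    exact mul_le_mul_of_nonneg_right h.norm_quadCoeff_le (sq_nonneg γ)
  have hSγ : S * γ ^ 2 ≤ 0.05 * (γ * S) := by
    nlinarith [mul_nonneg (mul_nonneg h.nonneg hγ0.le) (sub_nonneg.mpr hγ)]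
  linarith [norm_sub_le (1 + a * γ) ((a * b + a ^ 2 * r) * γ ^ 2), h.norm_one_add_mul_le hγ0 hγ,
    mul_nonneg hγ0.le h.nonneg]

lemma norm_cubic_le (h : CoeffBounds S a b r) {γ : ℝ} (hγ0 : 0 < γ) (hγ : γ ≤ 0.05) :
    ‖1 + a * γ - (a * b + a ^ 2 * r) * γ ^ 2
      + (a * b ^ 2 + 3 * a ^ 2 * b * r + 2 * a ^ 3 * r ^ 2) * γ ^ 3‖ ≤ 1 - γ * S / 2 := by
  have hγn : ‖(γ : ℂ)‖ = γ := by rw [Complex.norm_real, Real.norm_of_nonneg hγ0.le]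
  have hq : ‖(a * b ^ 2 + 3 * a ^ 2 * b * r + 2 * a ^ 3 * r ^ 2) * γ ^ 3‖ ≤ 23 * S * γ ^ 3 := by
    rw [norm_mul, norm_pow, hγn]
    exact mul_le_mul_of_nonneg_right h.norm_cubicCoeff_le (pow_nonneg hγ0.le 3)
  have hγ2 : γ ^ 2 ≤ 0.0025 := by nlinarith
  have hSγ : S * γ ^ 3 ≤ 0.0025 * (γ * S) := by
    have := mul_le_mul_of_nonneg_left hγ2 (mul_nonneg h.nonneg hγ0.le)
    linarith [show S * γ ^ 3 = S * γ * γ ^ 2 by ring]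
  linarith [norm_add_le (1 + a * γ - (a * b + a ^ 2 * r) * γ ^ 2)
      ((a * b ^ 2 + 3 * a ^ 2 * b * r + 2 * a ^ 3 * r ^ 2) * γ ^ 3),
    h.norm_quadratic_le hγ0 hγ, mul_nonneg hγ0.le h.nonneg]

end CoeffBounds

lemma norm_eit (t : ℝ) : ‖eit t‖ = 1 := by
  rw [eit, expi, one_mul, Complex.norm_exp_I_mul_ofReal]

lemma ofReal_one_sub (β : ℝ) : (1 - (β : ℂ)) = ((1 - β : ℝ) : ℂ) := by push_cast; ring

lemma one_sub_le_norm_one_sub_mul_eit {β : ℝ} (hβ : 0 ≤ β) (t : ℝ) :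
    1 - β ≤ ‖1 - (β : ℂ) * eit t‖ := by
  have h := norm_sub_norm_le (1 : ℂ) ((β : ℂ) * eit t)
  rwa [norm_one, norm_mul, norm_eit, mul_one, Complex.norm_real, Real.norm_of_nonneg hβ] at h

lemma norm_Hhat_le_one {β : ℝ} (hβ0 : 0 ≤ β) (hβ1 : β < 1) (t : ℝ) : ‖Hhat β t‖ ≤ 1 := by
  have hq := one_sub_le_norm_one_sub_mul_eit hβ0 t
  rw [Hhat, norm_div, norm_mul, norm_eit, mul_one, div_le_one (by linarith), ofReal_one_sub,
    Complex.norm_real, Real.norm_of_nonneg (by linarith)]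
  exact hq

lemma Psihat_eq_ofReal_mul_Hhat {α β : ℝ} (hβ : β ≠ 1) (t : ℝ) :
    Psihat α β t = (((1 - α - β) / (1 - β) : ℝ) : ℂ) * Hhat β t := by
  have h1β : (1 - (β : ℂ)) ≠ 0 := by
    rw [ofReal_one_sub]; exact_mod_cast sub_ne_zero.mpr (Ne.symm hβ)
  rw [Psihat, Hhat]
  push_cast
  field_simp

def Bhat (β γ : ℝ) (t : ℝ) : ℂ := (β : ℂ) * (Hhat β t - 1) / (1 + (γ : ℂ) - (β : ℂ))

def Rhat (β γ : ℝ) (t : ℝ) : ℂ :=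
  (1 - (β : ℂ)) / ((1 + (γ : ℂ) - (β : ℂ)) * (1 - (β : ℂ) * eit t))

section Factorization

variable (α β γ t : ℝ)

lemma Delta1Hat_eq : Delta1Hat α β γ t = 1 + A1 α β γ t * γ
    - (A1 α β γ t * Bhat β γ t + A1 α β γ t ^ 2 * Rhat β γ t) * γ ^ 2 := by
  simp only [Delta1Hat, A1, A2, A4, Bhat, Rhat]
  generalize 1 + (γ : ℂ) - β = D
  generalize 1 - (β : ℂ) * eit t = q
  ring

lemma Ahat_eq : Ahat α β γ t = 1 + A1 α β γ t * γ
    - (A1 α β γ t * Bhat β γ t + A1 α β γ t ^ 2 * Rhat β γ t) * γ ^ 2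
    + (A1 α β γ t * Bhat β γ t ^ 2 + 3 * A1 α β γ t ^ 2 * Bhat β γ t * Rhat β γ t
      + 2 * A1 α β γ t ^ 3 * Rhat β γ t ^ 2) * γ ^ 3 := by
  simp only [Ahat, A1, A2, A3, A4, A5, A6, Bhat, Rhat]
  generalize 1 + (γ : ℂ) - β = D
  generalize 1 - (β : ℂ) * eit t = q
  ring

end Factorization

section Coefficients

variable {α β γ : ℝ}

lemma norm_Psihat_le_one (hα : 0 ≤ α) (hβ0 : 0 ≤ β) (hβ1 : β < 1) (hαβ : α + β ≤ 1) (t : ℝ) :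
    ‖Psihat α β t‖ ≤ 1 := by
  rw [Psihat_eq_ofReal_mul_Hhat hβ1.ne, norm_mul, Complex.norm_real,
    Real.norm_of_nonneg (div_nonneg (by linarith) (by linarith))]
  exact mul_le_one₀ (div_le_one_of_le₀ (by linarith) (by linarith)) (norm_nonneg _)
    (norm_Hhat_le_one hβ0 hβ1 t)

lemma norm_Hhat_sub_one_mul_norm_Psihat_sub_one_le (hα : 0 ≤ α) (hβ0 : 0 ≤ β) (hβ1 : β < 1)
    (hαβ : α + β ≤ 1) (t : ℝ) :
    ‖Hhat β t - 1‖ * ‖Psihat α β t - 1‖ ≤ 4 * (1 - (Psihat α β t).re) := by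
  rw [Psihat_eq_ofReal_mul_Hhat hβ1.ne, Complex.re_ofReal_mul]
  exact norm_sub_one_mul_norm_ofReal_mul_sub_one_le (norm_Hhat_le_one hβ0 hβ1 t)
    (div_nonneg (by linarith) (by linarith)) (div_le_one_of_le₀ (by linarith) (by linarith))

lemma A1_eq_ofReal_mul (t : ℝ) :
    A1 α β γ t = (((1 - β) * (1 + γ - β)⁻¹ : ℝ) : ℂ) * (Psihat α β t - 1) := by
  rw [A1]; push_cast; ring

lemma Bhat_eq_ofReal_mul (t : ℝ) :
    Bhat β γ t = ((β * (1 + γ - β)⁻¹ : ℝ) : ℂ) * (Hhat β t - 1) := by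
  rw [Bhat]; push_cast; ring

lemma norm_Rhat_le (hβ0 : 0 ≤ β) (hβ1 : β < 1) (hγ : 0 ≤ γ) (t : ℝ) :
    ‖Rhat β γ t‖ ≤ (1 + γ - β)⁻¹ := by
  have hD : 0 < 1 + γ - β := by linarith
  have hq := one_sub_le_norm_one_sub_mul_eit hβ0 t
  rw [Rhat, norm_div, norm_mul, ofReal_one_sub,
    show 1 + (γ : ℂ) - β = ((1 + γ - β : ℝ) : ℂ) by push_cast; ring, Complex.norm_real,
    Complex.norm_real, Real.norm_of_nonneg hD.le, Real.norm_of_nonneg (by linarith),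
    div_le_iff₀ (mul_pos hD (by linarith)), inv_mul_cancel_left₀ hD.ne']
  exact hq

lemma coeffBounds_A1 (hα : 0 ≤ α) (hβ0 : 0 ≤ β) (hβ : β ≤ 0.15) (hγ0 : 0 ≤ γ)
    (hγ : γ ≤ 0.05) (hαβ : α + β ≤ 1) (t : ℝ) :
    CoeffBounds ((1 - β) * (1 - (Psihat α β t).re)) (A1 α β γ t) (Bhat β γ t) (Rhat β γ t) := by
  have hβ1 : β < 1 := by linarith
  have hD : 0 < 1 + γ - β := by linarith
  set k := (1 + γ - β)⁻¹
  have hk0 : 0.95 ≤ k := by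
    rw [le_inv_comm₀ (by norm_num) hD]; norm_num; linarith
  have hk1 : k ≤ 1.18 := by
    rw [inv_le_comm₀ hD (by norm_num)]; norm_num; linarith
  have hk2 : k ^ 2 ≤ 1.3924 := by nlinarith
  set H := Hhat β t
  set Ψ := Psihat α β t
  have hΨn := norm_Psihat_le_one hα hβ0 hβ1 hαβ t
  have hx : 0 ≤ 1 - Ψ.re := by linarith [Complex.re_le_norm Ψ]
  have hsq := norm_sub_one_sq_le hΨn
  have hprod := norm_Hhat_sub_one_mul_norm_Psihat_sub_one_le hα hβ0 hβ1 hαβ t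
  have hΨ2 : ‖Ψ - 1‖ ≤ 2 := by linarith [norm_sub_le Ψ 1, norm_one (α := ℂ)]
  have hH2 : ‖H - 1‖ ≤ 2 := by
    linarith [norm_sub_le H 1, norm_one (α := ℂ), norm_Hhat_le_one hβ0 hβ1 t]
  have hnA1 : ‖A1 α β γ t‖ = (1 - β) * k * ‖Ψ - 1‖ := by
    rw [A1_eq_ofReal_mul, norm_mul, Complex.norm_real, Real.norm_of_nonneg (by nlinarith)]
  have hnB : ‖Bhat β γ t‖ = β * k * ‖H - 1‖ := by
    rw [Bhat_eq_ofReal_mul, norm_mul, Complex.norm_real, Real.norm_of_nonneg (by nlinarith)]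
  refine ⟨mul_nonneg (by linarith) hx, ?_, ?_, ?_, ?_, ?_,
    (norm_Rhat_le hβ0 hβ1 hγ0 t).trans hk1⟩
  · rw [A1_eq_ofReal_mul, Complex.re_ofReal_mul, Complex.sub_re, Complex.one_re]
    nlinarith [mul_le_mul_of_nonneg_left hk0 (mul_nonneg (by linarith : 0 ≤ 1 - β) hx)]
  · rw [hnA1]
    calc (1 - β) * k * ‖Ψ - 1‖ ≤ 1 * 1.18 * 2 := by gcongr; linarith
      _ ≤ 2.4 := by norm_num
  · rw [hnA1]
    calc ((1 - β) * k * ‖Ψ - 1‖) ^ 2 = (1 - β) * ((1 - β) * k ^ 2) * ‖Ψ - 1‖ ^ 2 := by ring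
      _ ≤ (1 - β) * (1 * 1.3924) * (2 * (1 - Ψ.re)) := by gcongr; linarith
      _ ≤ 2.8 * ((1 - β) * (1 - Ψ.re)) := by nlinarith
  · rw [hnA1, hnB]
    calc (1 - β) * k * ‖Ψ - 1‖ * (β * k * ‖H - 1‖)
        = (1 - β) * (β * k ^ 2) * (‖H - 1‖ * ‖Ψ - 1‖) := by ring
      _ ≤ (1 - β) * (0.15 * 1.3924) * (4 * (1 - Ψ.re)) := by gcongr
      _ ≤ 0.84 * ((1 - β) * (1 - Ψ.re)) := by nlinarith
  · rw [hnB]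
    calc β * k * ‖H - 1‖ ≤ 0.15 * 1.18 * 2 := by gcongr
      _ ≤ 0.36 := by norm_num

end Coefficients

lemma one_sub_mul_one_sub_Psihat_re {α β : ℝ} (hβ : β ≠ 1) (t : ℝ) :
    (1 - β) * (1 - (Psihat α β t).re) = (1 - α - β) * (1 - (Hhat β t).re) + α := by
  have h1β : 1 - β ≠ 0 := sub_ne_zero.mpr (Ne.symm hβ)
  rw [Psihat_eq_ofReal_mul_Hhat hβ, Complex.re_ofReal_mul]
  field_simp
  ring

section Bounds

variable {α β γ : ℝ}

lemma norm_Ahat_le (hα : 0 ≤ α) (hβ0 : 0 ≤ β) (hβ : β ≤ 0.15) (hγ0 : 0 < γ) (hγ : γ ≤ 0.05)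
    (hαβ : α + β ≤ 1) (t : ℝ) :
    ‖Ahat α β γ t‖ ≤ 1 - γ * ((1 - β) * (1 - (Psihat α β t).re)) / 2 := by
  rw [Ahat_eq]
  exact (coeffBounds_A1 hα hβ0 hβ hγ0.le hγ hαβ t).norm_cubic_le hγ0 hγ

lemma norm_Delta1Hat_le (hα : 0 ≤ α) (hβ0 : 0 ≤ β) (hβ : β ≤ 0.15) (hγ0 : 0 < γ)
    (hγ : γ ≤ 0.05) (hαβ : α + β ≤ 1) (t : ℝ) :
    ‖Delta1Hat α β γ t‖ ≤ 1 - 0.6 * γ * ((1 - β) * (1 - (Psihat α β t).re)) := by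
  rw [Delta1Hat_eq]
  exact (coeffBounds_A1 hα hβ0 hβ hγ0.le hγ hαβ t).norm_quadratic_le hγ0 hγ

end Bounds

theorem stmt7_general (C₀ : ℝ) :
    (∃ C > (0 : ℝ), ∀ α β γ : ℝ, condC C₀ α β γ → ∀ t : ℝ, |t| ≤ Real.pi →
      ‖Ahat α β γ t‖ ≤ 1 + C * γ * ((Hhat β t).re - 1 - α)) ∧
    (∀ C₂ > (0 : ℝ), ∃ C' > (0 : ℝ), ∀ α β γ : ℝ, condC C₀ α β γ → C₂ ≤ α →
      ∀ t : ℝ, |t| ≤ Real.pi → ‖Delta1Hat α β γ t‖ ≤ 1 - C' * γ) := by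
  refine ⟨⟨1 / 20, by norm_num, ?_⟩, fun C₂ hC₂ => ⟨C₂ / 2, by positivity, ?_⟩⟩
  · rintro α β γ ⟨hα, -, hβ0, hβ1, hγ0, -, hβ, hγ, -, hαβ⟩ t -
    have hA := norm_Ahat_le hα.le hβ0.le hβ hγ0 hγ hαβ.le t
    rw [one_sub_mul_one_sub_Psihat_re hβ1.ne] at hA
    obtain ⟨hre₁, hre₂⟩ := abs_le.mp
      ((Complex.abs_re_le_norm _).trans (norm_Hhat_le_one hβ0.le hβ1 t))
    have hS : (1 - (Hhat β t).re + α) / 10 ≤ (1 - α - β) * (1 - (Hhat β t).re) + α := by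
      nlinarith [mul_nonneg (sub_nonneg.mpr hre₂) (by linarith : (0 : ℝ) ≤ 1 - α - β),
        mul_nonneg (sub_nonneg.mpr hre₂) (by linarith : (0 : ℝ) ≤ 0.7 - 0.9 * β),
        mul_nonneg (by linarith : (0 : ℝ) ≤ 1 + (Hhat β t).re) hα.le]
    nlinarith [mul_le_mul_of_nonneg_left hS hγ0.le]
  · rintro α β γ ⟨hα, -, hβ0, hβ1, hγ0, -, hβ, hγ, -, hαβ⟩ hC₂α t -
    have hD := norm_Delta1Hat_le hα.le hβ0.le hβ hγ0 hγ hαβ.le t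
    rw [one_sub_mul_one_sub_Psihat_re hβ1.ne] at hD
    have hre := (Complex.re_le_norm _).trans (norm_Hhat_le_one hβ0.le hβ1 t)
    have hx : 0 ≤ (1 - α - β) * (1 - (Hhat β t).re) :=
      mul_nonneg (by linarith) (by linarith)
    nlinarith [mul_le_mul_of_nonneg_left hC₂α hγ0.le]

/-- `|Â(t)| ≤ 1 + Cγ(Re Ĥ(t) − 1 − α)`; moreover if `α ≥ C₂` then
`|Δ̂₁(t)| ≤ 1 − C'γ`. -/
theorem stmt7 (C₀ : ℝ) (hC₀ : C₀ ∈ Set.Ioo (0 : ℝ) 1) :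
    (∃ C > (0 : ℝ), ∀ α β γ : ℝ, condC C₀ α β γ → ∀ t : ℝ, |t| ≤ Real.pi →
      ‖Ahat α β γ t‖ ≤ 1 + C * γ * ((Hhat β t).re - 1 - α)) ∧
    (∀ C₂ > (0 : ℝ), ∃ C' > (0 : ℝ), ∀ α β γ : ℝ, condC C₀ α β γ → C₂ ≤ α →
      ∀ t : ℝ, |t| ≤ Real.pi → ‖Delta1Hat α β γ t‖ ≤ 1 - C' * γ) :=
  stmt7_general C₀
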